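/- arXiv:1805.04175 — 4 statements merged into one kernel-verified Lean document; each statement's English description precedes it below -/
import Mathlib

section
/- Let T be a rooted binary tree with n ≥ 2 leaves. Then the CFN-MC polytope R_T has exactly F_n vertices: the set of distinct top-vectors of systems of disjoint paths in T has cardinality F_n, and this set is precisely the set of extreme points of R_T. -/
open Pointwise

/-- A rooted binary tree on the finite vertex type `V`, presented by its parent function:
the root is its own parent, every vertex reaches the root by iterating the parent map,
every vertex has either no children (a leaf) or exactly two children, and the root has
exactly two children (so the root has degree 2, leaves have degree 1, and all other
vertices have degree 3). -/
structure RBT (V : Type) [Fintype V] [DecidableEq V] : Type where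
  root : V
  parent : V → V
  parent_root : parent root = root
  reaches : ∀ v : V, ∃ k : ℕ, parent^[k] v = root
  binary : ∀ v : V,
    Nat.card {u : V // parent u = v ∧ u ≠ v} = 0 ∨
      Nat.card {u : V // parent u = v ∧ u ≠ v} = 2
  root_binary : Nat.card {u : V // parent u = root ∧ u ≠ root} = 2

namespace RBT

variable {V : Type} [Fintype V] [DecidableEq V] (T : RBT V)

/-- `u` is a child of `v` in `T`. -/
def isChild (u v : V) : Prop := T.parent u = v ∧ u ≠ v

/-- A leaf of `T` is a vertex with no children. -/
def isLeaf (v : V) : Prop := ∀ u : V, T.parent u = v → u = v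

/-- An internal vertex of `T` is a vertex which is not a leaf. -/
def isInternal (v : V) : Prop := ¬ T.isLeaf v

instance : DecidablePred T.isLeaf := fun v =>
  decidable_of_iff (∀ u : V, T.parent u = v → u = v) Iff.rfl

instance : DecidablePred T.isInternal := fun v =>
  inferInstanceAs (Decidable (¬ T.isLeaf v))

/-- `u` is a (weak) descendant of `v`, i.e. `v` lies on the path from `u` to the root. -/
def desc (u v : V) : Prop := ∃ k : ℕ, T.parent^[k] u = v

/-- `u` is a strict descendant of `v`. -/
def strictDesc (u v : V) : Prop := T.desc u v ∧ u ≠ v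

/-- `u` and `v` are adjacent vertices of `T`. -/
def adjacent (u v : V) : Prop := T.isChild u v ∨ T.isChild v u

instance : DecidableRel T.isChild := fun u v =>
  decidable_of_iff (T.parent u = v ∧ u ≠ v) Iff.rfl

instance : DecidableRel T.adjacent := fun u v =>
  inferInstanceAs (Decidable (T.isChild u v ∨ T.isChild v u))

/-- The set of edges (each edge being labelled by its endpoint farther from the root)
on the path from `l` up to the root. -/
def upEdges (l : V) : Set V := {u : V | u ≠ T.root ∧ T.desc l u}

/-- The edge set of the unique path in `T` joining the two members of an unordered
pair of vertices (edges are labelled by their endpoint farther from the root). -/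
def pathEdges : Sym2 V → Set V :=
  Sym2.lift ⟨fun l₁ l₂ => symmDiff (T.upEdges l₁) (T.upEdges l₂), fun _ _ => symmDiff_comm _ _⟩

/-- `v` is the lowest common ancestor of `l₁` and `l₂`: it is an ancestor of both, and it
descends from every common ancestor.  Equivalently, `v` is the unique vertex of the path
from `l₁` to `l₂` which is an ancestor of every vertex of that path. -/
def isLCA (l₁ l₂ v : V) : Prop :=
  T.desc l₁ v ∧ T.desc l₂ v ∧ ∀ w : V, T.desc l₁ w → T.desc l₂ w → T.desc v w

/-- `v` is the top vertex of the path joining the two members of the unordered pair `p`. -/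
def isTopOf (v : V) : Sym2 V → Prop :=
  Sym2.lift ⟨fun l₁ l₂ => T.isLCA l₁ l₂ v, fun a b => by
    simp only [eq_iff_iff, isLCA]
    constructor <;> rintro ⟨h₁, h₂, h₃⟩ <;> exact ⟨h₂, h₁, fun w hw₁ hw₂ => h₃ w hw₂ hw₁⟩⟩

end RBT

/-- A system of disjoint paths in `T`: a finite set of unordered pairs of distinct leaves,
such that the unique paths in `T` joining the pairs are pairwise edge-disjoint. -/
structure PathSystem {V : Type} [Fintype V] [DecidableEq V] (T : RBT V) : Type where
  pairs : Finset (Sym2 V)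
  leaf_mem : ∀ p ∈ pairs, ∀ l ∈ p, T.isLeaf l
  not_diag : ∀ p ∈ pairs, ¬ p.IsDiag
  edge_disjoint : (pairs : Set (Sym2 V)).Pairwise fun p q =>
    Disjoint (T.pathEdges p) (T.pathEdges q)

namespace PathSystem

variable {V : Type} [Fintype V] [DecidableEq V] {T : RBT V}

/-- The top-set of a system of disjoint paths: the set of top vertices of its paths. -/
def topSet (P : PathSystem T) : Set V := {v : V | ∃ p ∈ P.pairs, T.isTopOf v p}

/-- The top-vector of a system of disjoint paths, as a point of `ℝ^{Int(T)}`: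
the 0/1 indicator vector of its top-set. -/
noncomputable def topVector (P : PathSystem T) : {v : V // T.isInternal v} → ℝ := fun v =>
  Set.indicator P.topSet (fun _ => (1 : ℝ)) (v : V)

end PathSystem

namespace RBT

variable {V : Type} [Fintype V] [DecidableEq V] (T : RBT V)

/-- The set of top-vectors of all systems of disjoint paths in `T`. -/
noncomputable def topVectors : Set ({v : V // T.isInternal v} → ℝ) :=
  Set.range fun P : PathSystem T => P.topVector

/-- The CFN-MC polytope `R_T ⊆ ℝ^{Int(T)}`: the convex hull of the top-vectors of all
systems of disjoint paths in `T`. -/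
noncomputable def cfnmcPolytope : Set ({v : V // T.isInternal v} → ℝ) :=
  convexHull ℝ T.topVectors

end RBT

/-!
The top-sets of systems of disjoint paths are exactly the *admissible* sets: sets `S` of
internal vertices such that from each child of each `w ∈ S` some leaf can be reached downwards
without meeting `S`. Indeed the path with top `w` descends through both children of `w`, and
edge-disjointness forbids it to pass through another top; conversely, pairing each `w ∈ S` with
two leaves reached along such routes gives edge-disjoint paths.

Let `a(v)` count the admissible sets in the subtree at `v`, and `f(v)` those which moreover leave
a route from `v` to a leaf avoiding them. Splitting at the children `c₁, c₂` of `v` according to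
whether `v ∈ S` gives `a(v) = f(c₁) f(c₂) + a(c₁) a(c₂)` and
`f(v) = f(c₁) a(c₂) + (a(c₁) - f(c₁)) f(c₂)`, so that `a = fib (n + 1)` and `f = fib n` for a
subtree with `n` leaves. Distinct top-sets of internal vertices have distinct indicator vectors,
and 0/1 vectors are extreme points of any convex set inside the unit cube.
-/

theorem Set.ncard_setOf_eq_mul {α : Type*} {A B : Set α} (hAB : Disjoint A B)
    {p q r : Set α → Prop} (hp : ∀ S, p S → S ⊆ A) (hq : ∀ S, q S → S ⊆ B)
    (hr : ∀ S, r S ↔ S ⊆ A ∪ B ∧ p (S ∩ A) ∧ q (S ∩ B)) :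
    {S | r S}.ncard = {S | p S}.ncard * {S | q S}.ncard := by
  have hA : ∀ X Y, X ⊆ A → Y ⊆ B → (X ∪ Y) ∩ A = X := fun X Y hX hY => by
    rw [Set.union_inter_distrib_right, Set.inter_eq_left.2 hX,
      (hAB.symm.mono_left hY).inter_eq, Set.union_empty]
  have hB : ∀ X Y, X ⊆ A → Y ⊆ B → (X ∪ Y) ∩ B = Y := fun X Y hX hY => by
    rw [Set.union_inter_distrib_right, Set.inter_eq_left.2 hY,
      (hAB.mono_left hX).inter_eq, Set.empty_union]
  have himage : {S | r S} = (fun X : Set α × Set α => X.1 ∪ X.2) '' {S | p S} ×ˢ {S | q S} := by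
    ext S
    simp only [hr, Set.mem_ofPred_eq, Set.mem_image, Set.mem_prod, Prod.exists]
    constructor
    · rintro ⟨hS, hpS, hqS⟩
      exact ⟨_, _, ⟨hpS, hqS⟩, by rw [← Set.inter_union_distrib_left, Set.inter_eq_left.2 hS]⟩
    · rintro ⟨X, Y, ⟨hX, hY⟩, rfl⟩
      rw [hA X Y (hp X hX) (hq Y hY), hB X Y (hp X hX) (hq Y hY)]
      exact ⟨Set.union_subset_union (hp X hX) (hq Y hY), hX, hY⟩
  rw [himage, Set.InjOn.ncard_image, Set.ncard_prod]
  rintro ⟨X, Y⟩ ⟨hX, hY⟩ ⟨X', Y'⟩ ⟨hX', hY'⟩ h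
  change X ∪ Y = X' ∪ Y' at h
  have h₁ : (X ∪ Y) ∩ A = (X' ∪ Y') ∩ A := by rw [h]
  have h₂ : (X ∪ Y) ∩ B = (X' ∪ Y') ∩ B := by rw [h]
  rw [hA X Y (hp X hX) (hq Y hY), hA X' Y' (hp X' hX') (hq Y' hY')] at h₁
  rw [hB X Y (hp X hX) (hq Y hY), hB X' Y' (hp X' hX') (hq Y' hY')] at h₂
  rw [h₁, h₂]

theorem extremePoints_convexHull_of_forall_eq_zero_or_one {ι : Type*} {s : Set (ι → ℝ)}
    (hs : ∀ x ∈ s, ∀ i, x i = 0 ∨ x i = 1) : (convexHull ℝ s).extremePoints ℝ = s := by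
  refine extremePoints_convexHull_subset.antisymm fun x hx => ?_
  have hbox : convexHull ℝ s ⊆ Set.univ.pi fun _ => Set.Icc 0 1 :=
    convexHull_min (fun y hy i _ => by rcases hs y hy i with h | h <;> simp [h])
      (convex_pi fun _ _ => convex_Icc 0 1)
  refine inter_extremePoints_subset_extremePoints_of_subset hbox ⟨subset_convexHull ℝ s hx, ?_⟩
  rw [extremePoints_pi, Set.extremePoints_Icc zero_le_one]
  exact fun i _ => hs x hx i

namespace RBT

variable {V : Type} [Fintype V] [DecidableEq V] {T : RBT V}

/-! ### The descendant order -/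

lemma iterate_parent_root (k : ℕ) : T.parent^[k] T.root = T.root :=
  Function.iterate_fixed T.parent_root k

lemma desc_refl (v : V) : T.desc v v := ⟨0, rfl⟩

lemma desc_parent (v : V) : T.desc v (T.parent v) := ⟨1, rfl⟩

lemma desc_root (v : V) : T.desc v T.root := T.reaches v

lemma desc_trans {u v w : V} (huv : T.desc u v) (hvw : T.desc v w) : T.desc u w := by
  obtain ⟨k, rfl⟩ := huv
  obtain ⟨j, rfl⟩ := hvw
  exact ⟨j + k, Function.iterate_add_apply _ _ _ _⟩

lemma desc_antisymm {u v : V} (huv : T.desc u v) (hvu : T.desc v u) : u = v := by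
  obtain ⟨k, hk⟩ := huv
  obtain ⟨j, hj⟩ := hvu
  rcases Nat.eq_zero_or_pos k with rfl | hpos
  · exact hk
  -- `u` is periodic under `parent`, but its orbit ends in the fixed point `root`.
  have hper : Function.IsPeriodicPt T.parent (j + k) u := by
    rw [Function.IsPeriodicPt, Function.IsFixedPt, Function.iterate_add_apply, hk, hj]
  obtain ⟨r, hr⟩ := T.reaches u
  have hu : u = T.root := by
    rw [← (hper.mul_const r).eq, ← Nat.sub_add_cancel (Nat.le_mul_of_pos_left r (by omega)),
      Function.iterate_add_apply, hr, iterate_parent_root]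
  rw [← hk, hu, iterate_parent_root]

lemma eq_root_of_desc_root {v : V} (h : T.desc T.root v) : v = T.root :=
  (desc_antisymm h (desc_root v)).symm

lemma desc_total {u v w : V} (huv : T.desc u v) (huw : T.desc u w) :
    T.desc v w ∨ T.desc w v := by
  obtain ⟨k, rfl⟩ := huv
  obtain ⟨j, rfl⟩ := huw
  rcases le_total k j with h | h
  · exact .inl ⟨j - k, by rw [← Function.iterate_add_apply, Nat.sub_add_cancel h]⟩
  · exact .inr ⟨k - j, by rw [← Function.iterate_add_apply, Nat.sub_add_cancel h]⟩

lemma desc_parent_of_strictDesc {u v : V} (h : T.strictDesc u v) : T.desc (T.parent u) v := by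
  obtain ⟨⟨k, hk⟩, hne⟩ := h
  cases k with
  | zero => exact absurd hk hne
  | succ k => exact ⟨k, by rwa [← Function.iterate_succ_apply]⟩

lemma exists_isChild_desc {u v : V} (h : T.strictDesc u v) :
    ∃ c, T.isChild c v ∧ T.desc u c := by
  obtain ⟨⟨k, hk⟩, hne⟩ := h
  induction k generalizing u with
  | zero => exact absurd hk hne
  | succ k ih =>
    rw [Function.iterate_succ_apply] at hk
    by_cases hp : T.parent u = v
    · exact ⟨u, ⟨hp, hne⟩, desc_refl u⟩
    · obtain ⟨c, hc, hpc⟩ := ih hp hk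
      exact ⟨c, hc, desc_trans (desc_parent u) hpc⟩

lemma strictDesc_of_desc_of_isChild {u c v : V} (h : T.desc u c) (hc : T.isChild c v) :
    T.strictDesc u v :=
  ⟨desc_trans h ⟨1, hc.1⟩, fun huv => hc.2 (desc_antisymm ⟨1, hc.1⟩ (huv ▸ h))⟩

instance : IsTrans V T.strictDesc :=
  ⟨fun _ _ _ ⟨huv, hne⟩ ⟨hvw, _⟩ =>
    ⟨desc_trans huv hvw, fun h => hne (desc_antisymm huv (h ▸ hvw))⟩⟩

instance : Std.Irrefl T.strictDesc := ⟨fun _ h => h.2 rfl⟩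

lemma strictDesc_wellFounded : WellFounded T.strictDesc :=
  Finite.wellFounded_of_trans_of_irrefl _

lemma eq_of_isLeaf_of_desc {u l : V} (hl : T.isLeaf l) (h : T.desc u l) : u = l := by
  by_contra hne
  obtain ⟨c, hc, -⟩ := exists_isChild_desc ⟨h, hne⟩
  exact hc.2 (hl c hc.1)

lemma isInternal_of_isChild {c v : V} (hc : T.isChild c v) : T.isInternal v :=
  fun hl => hc.2 (hl c hc.1)

lemma eq_of_isChild_of_desc {u c c' v : V} (hc : T.isChild c v) (hc' : T.isChild c' v)
    (h : T.desc u c) (h' : T.desc u c') : c = c' := by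
  by_contra hne
  -- if `c` were strictly below its sibling `c'`, then `v = parent c` would be below `c'` too
  rcases desc_total h h' with hcc' | hc'c
  · exact hc'.2 (desc_antisymm ⟨1, hc'.1⟩ (hc.1 ▸ desc_parent_of_strictDesc ⟨hcc', hne⟩))
  · exact hc.2 (desc_antisymm ⟨1, hc.1⟩ (hc'.1 ▸ desc_parent_of_strictDesc ⟨hc'c, Ne.symm hne⟩))

lemma desc_of_desc_of_strictDesc {l u c v : V} (hc : T.isChild c v) (hl : T.desc l c)
    (hlu : T.desc l u) (huv : T.strictDesc u v) : T.desc u c := by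
  rcases desc_total hlu hl with huc | hcu
  · exact huc
  · by_cases h : c = u
    · exact h ▸ desc_refl c
    · exact absurd (desc_antisymm huv.1 (hc.1 ▸ desc_parent_of_strictDesc ⟨hcu, h⟩)) huv.2

def IsChildPair (v c₁ c₂ : V) : Prop :=
  c₁ ≠ c₂ ∧ ∀ c, T.isChild c v ↔ c = c₁ ∨ c = c₂

lemma exists_isChildPair {v : V} (hv : T.isInternal v) : ∃ c₁ c₂, T.IsChildPair v c₁ c₂ := by
  have hcard : (Finset.univ.filter (T.isChild · v)).card = 2 := by
    rcases T.binary v with h | h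
    · obtain ⟨c, hc⟩ : ∃ c, T.isChild c v := by
        by_contra! h'
        exact hv fun u hu => by_contra fun hne => h' u ⟨hu, hne⟩
      have : Nonempty {u // T.parent u = v ∧ u ≠ v} := ⟨⟨c, hc⟩⟩
      exact absurd h Nat.card_pos.ne'
    · rw [Nat.card_eq_fintype_card, Fintype.card_subtype] at h
      convert h using 3
      exact Iff.rfl
  obtain ⟨c₁, c₂, hne, hs⟩ := Finset.card_eq_two.1 hcard
  exact ⟨c₁, c₂, hne, fun c => by simpa using Finset.ext_iff.1 hs c⟩

section IsChildPair

variable {v c₁ c₂ : V} (hv : T.IsChildPair v c₁ c₂)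
include hv

lemma IsChildPair.isChild_left : T.isChild c₁ v := (hv.2 c₁).2 (.inl rfl)

lemma IsChildPair.isChild_right : T.isChild c₂ v := (hv.2 c₂).2 (.inr rfl)

lemma IsChildPair.isInternal : T.isInternal v := isInternal_of_isChild hv.isChild_left

lemma IsChildPair.desc_or_desc {u : V} (h : T.strictDesc u v) : T.desc u c₁ ∨ T.desc u c₂ := by
  obtain ⟨c, hc, huc⟩ := exists_isChild_desc h
  rcases (hv.2 c).1 hc with rfl | rfl
  exacts [.inl huc, .inr huc]

lemma IsChildPair.not_desc_both {u : V} (h₁ : T.desc u c₁) (h₂ : T.desc u c₂) : False :=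
  hv.1 (eq_of_isChild_of_desc hv.isChild_left hv.isChild_right h₁ h₂)

end IsChildPair

/-! ### Paths between leaves -/

lemma isLCA_comm {l₁ l₂ x : V} (hx : T.isLCA l₁ l₂ x) : T.isLCA l₂ l₁ x :=
  ⟨hx.2.1, hx.1, fun w hw₂ hw₁ => hx.2.2 w hw₁ hw₂⟩

lemma eq_of_isTopOf {x y : V} {p : Sym2 V} (hx : T.isTopOf x p) (hy : T.isTopOf y p) :
    x = y := by
  induction p using Sym2.ind with
  | h l₁ l₂ => exact desc_antisymm (hx.2.2 y hy.1 hy.2.1) (hy.2.2 x hx.1 hx.2.1)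

lemma isInternal_of_isLCA {l₁ l₂ x : V} (hx : T.isLCA l₁ l₂ x) (hne : l₁ ≠ l₂) :
    T.isInternal x := fun hl =>
  hne ((eq_of_isLeaf_of_desc hl hx.1).trans (eq_of_isLeaf_of_desc hl hx.2.1).symm)

lemma mem_upEdges_sdiff_iff {l₁ l₂ x u : V} (hx : T.isLCA l₁ l₂ x) (hu : T.desc l₁ u) :
    u ∈ T.upEdges l₁ \ T.upEdges l₂ ↔ T.strictDesc u x := by
  simp only [upEdges, Set.mem_sdiff, Set.mem_ofPred_eq, not_and]
  constructor
  · rintro ⟨⟨hroot, -⟩, hl₂⟩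
    rcases desc_total hu hx.1 with hux | hxu
    · exact ⟨hux, fun h => hl₂ hroot (h ▸ hx.2.1)⟩
    · exact absurd (desc_trans hx.2.1 hxu) (hl₂ hroot)
  · rintro ⟨hux, hne⟩
    have hroot : u ≠ T.root := fun h => hne (h.trans (eq_root_of_desc_root (h ▸ hux)).symm)
    exact ⟨⟨hroot, hu⟩, fun _ hl₂ => hne (desc_antisymm hux (hx.2.2 u hu hl₂))⟩

lemma mem_pathEdges_iff {l₁ l₂ x u : V} (hx : T.isLCA l₁ l₂ x) :
    u ∈ T.pathEdges s(l₁, l₂) ↔ T.strictDesc u x ∧ (T.desc l₁ u ∨ T.desc l₂ u) := by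
  change u ∈ symmDiff (T.upEdges l₁) (T.upEdges l₂) ↔ _
  rw [Set.mem_symmDiff]
  constructor
  · rintro (hu | hu)
    · exact ⟨(mem_upEdges_sdiff_iff hx hu.1.2).1 hu, .inl hu.1.2⟩
    · exact ⟨(mem_upEdges_sdiff_iff (isLCA_comm hx) hu.1.2).1 hu, .inr hu.1.2⟩
  · rintro ⟨hux, hu | hu⟩
    · exact .inl ((mem_upEdges_sdiff_iff hx hu).2 hux)
    · exact .inr ((mem_upEdges_sdiff_iff (isLCA_comm hx) hu).2 hux)

lemma desc_or_desc_of_isLCA {l₁ l₂ x c : V} (hx : T.isLCA l₁ l₂ x) (hl₁ : T.isLeaf l₁)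
    (hl₂ : T.isLeaf l₂) (hne : l₁ ≠ l₂) (hc : T.isChild c x) : T.desc l₁ c ∨ T.desc l₂ c := by
  have hint := isInternal_of_isLCA hx hne
  obtain ⟨c₁, c₂, hcx⟩ := exists_isChildPair hint
  have h₁ := hcx.desc_or_desc ⟨hx.1, fun h => hint (h ▸ hl₁)⟩
  have h₂ := hcx.desc_or_desc ⟨hx.2.1, fun h => hint (h ▸ hl₂)⟩
  have hsep : ∀ c', T.isChild c' x → ¬ (T.desc l₁ c' ∧ T.desc l₂ c') := fun c' hc' h =>
    hc'.2 (desc_antisymm ⟨1, hc'.1⟩ (hx.2.2 c' h.1 h.2))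
  have := hsep c₁ hcx.isChild_left
  have := hsep c₂ hcx.isChild_right
  rcases (hcx.2 c).1 hc with rfl | rfl <;> tauto

lemma isChild_mem_pathEdges {l₁ l₂ x c : V} (hx : T.isLCA l₁ l₂ x) (hl₁ : T.isLeaf l₁)
    (hl₂ : T.isLeaf l₂) (hne : l₁ ≠ l₂) (hc : T.isChild c x) : c ∈ T.pathEdges s(l₁, l₂) :=
  (mem_pathEdges_iff hx).2
    ⟨strictDesc_of_desc_of_isChild (desc_refl c) hc, desc_or_desc_of_isLCA hx hl₁ hl₂ hne hc⟩

/-! ### Admissible sets are the top-sets -/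

variable (T) in
def subtree (v : V) : Set V := {u | T.desc u v}

variable (T) in
def ReachesLeafAvoiding (S : Set V) (c : V) : Prop :=
  ∃ l, T.isLeaf l ∧ T.desc l c ∧ ∀ u, T.desc l u → T.desc u c → u ∉ S

variable (T) in
def Admissible (v : V) (S : Set V) : Prop :=
  S ⊆ T.subtree v ∧ (∀ u ∈ S, T.isInternal u) ∧
    ∀ w ∈ S, ∀ c, T.isChild c w → T.ReachesLeafAvoiding S c

lemma _root_.PathSystem.exists_eq_mk {P : PathSystem T} {p : Sym2 V} (hp : p ∈ P.pairs) :
    ∃ l₁ l₂, p = s(l₁, l₂) ∧ T.isLeaf l₁ ∧ T.isLeaf l₂ ∧ l₁ ≠ l₂ := by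
  induction p using Sym2.ind with
  | h l₁ l₂ =>
    exact ⟨l₁, l₂, rfl, P.leaf_mem _ hp l₁ (Sym2.mem_mk_left _ _),
      P.leaf_mem _ hp l₂ (Sym2.mem_mk_right _ _), fun h => P.not_diag _ hp (h ▸ rfl)⟩

theorem _root_.PathSystem.admissible_topSet (P : PathSystem T) : T.Admissible T.root P.topSet := by
  refine ⟨fun u _ => desc_root u, ?_, ?_⟩
  · rintro x ⟨p, hp, hx⟩
    obtain ⟨l₁, l₂, rfl, -, -, hne⟩ := P.exists_eq_mk hp
    exact isInternal_of_isLCA hx hne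
  rintro x ⟨p, hp, hx⟩ c hc
  obtain ⟨l₁, l₂, rfl, hl₁, hl₂, hne⟩ := P.exists_eq_mk hp
  obtain ⟨l, hl, hlc, hlp⟩ : ∃ l, T.isLeaf l ∧ T.desc l c ∧ (l = l₁ ∨ l = l₂) := by
    rcases desc_or_desc_of_isLCA hx hl₁ hl₂ hne hc with h | h
    exacts [⟨l₁, hl₁, h, .inl rfl⟩, ⟨l₂, hl₂, h, .inr rfl⟩]
  refine ⟨l, hl, hlc, ?_⟩
  rintro u hlu huc ⟨q, hq, hu⟩
  obtain ⟨m₁, m₂, rfl, hm₁, hm₂, hm⟩ := P.exists_eq_mk hq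
  -- the edge below the top `u` of `q` towards `l` lies on both paths
  obtain ⟨d, hd, hld⟩ :=
    exists_isChild_desc ⟨hlu, fun h => isInternal_of_isLCA hu hm (h ▸ hl)⟩
  have hdq : d ∈ T.pathEdges s(m₁, m₂) := isChild_mem_pathEdges hu hm₁ hm₂ hm hd
  have hdp : d ∈ T.pathEdges s(l₁, l₂) := (mem_pathEdges_iff hx).2
    ⟨strictDesc_of_desc_of_isChild (desc_trans ⟨1, hd.1⟩ huc) hc, by
      rcases hlp with rfl | rfl
      exacts [.inl hld, .inr hld]⟩
  have hqp : s(m₁, m₂) ≠ s(l₁, l₂) := fun h =>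
    (strictDesc_of_desc_of_isChild huc hc).2 (eq_of_isTopOf (h ▸ hu) hx)
  exact Set.disjoint_left.1 (P.edge_disjoint hq hp hqp) hdq hdp

lemma Admissible.exists_isTopOf {r v : V} {S : Set V} (hS : T.Admissible r S) (hv : v ∈ S) :
    ∃ p : Sym2 V, (∀ l ∈ p, T.isLeaf l) ∧ ¬ p.IsDiag ∧ T.isTopOf v p ∧
      ∀ u ∈ T.pathEdges p, u ∉ S := by
  obtain ⟨c₁, c₂, hc⟩ := exists_isChildPair (hS.2.1 v hv)
  obtain ⟨l₁, hl₁, hlc₁, hS₁⟩ := hS.2.2 v hv c₁ hc.isChild_left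
  obtain ⟨l₂, hl₂, hlc₂, hS₂⟩ := hS.2.2 v hv c₂ hc.isChild_right
  have hx : T.isLCA l₁ l₂ v := by
    refine ⟨desc_trans hlc₁ ⟨1, hc.isChild_left.1⟩, desc_trans hlc₂ ⟨1, hc.isChild_right.1⟩,
      fun w hw₁ hw₂ => ?_⟩
    rcases desc_total hw₁ (desc_trans hlc₁ ⟨1, hc.isChild_left.1⟩) with hwv | hvw
    · by_cases hwv' : w = v
      · rw [hwv']
        exact desc_refl v
      · exact (hc.not_desc_both
          (desc_of_desc_of_strictDesc hc.isChild_left hlc₁ hw₁ ⟨hwv, hwv'⟩)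
          (desc_of_desc_of_strictDesc hc.isChild_right hlc₂ hw₂ ⟨hwv, hwv'⟩)).elim
    · exact hvw
  refine ⟨s(l₁, l₂), ?_, fun h => hc.not_desc_both (Sym2.mk_isDiag_iff.1 h ▸ hlc₁) hlc₂, hx,
    fun u hu => ?_⟩
  · intro l hl
    rcases Sym2.mem_iff.1 hl with rfl | rfl
    exacts [hl₁, hl₂]
  · obtain ⟨huv, h | h⟩ := (mem_pathEdges_iff hx).1 hu
    · exact hS₁ u h (desc_of_desc_of_strictDesc hc.isChild_left hlc₁ h huv)
    · exact hS₂ u h (desc_of_desc_of_strictDesc hc.isChild_right hlc₂ h huv)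

lemma disjoint_pathEdges {p q : Sym2 V} {v w : V} (hv : T.isTopOf v p) (hw : T.isTopOf w q)
    (hwp : w ∉ T.pathEdges p) (hvq : v ∉ T.pathEdges q) (hvw : v ≠ w) :
    Disjoint (T.pathEdges p) (T.pathEdges q) := by
  induction p using Sym2.ind with | h l₁ l₂ => ?_
  induction q using Sym2.ind with | h m₁ m₂ => ?_
  refine Set.disjoint_left.2 fun u hup huq => ?_
  obtain ⟨huv, hl⟩ := (mem_pathEdges_iff hv).1 hup
  obtain ⟨huw, hm⟩ := (mem_pathEdges_iff hw).1 huq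
  rcases desc_total huv.1 huw.1 with hvw' | hwv'
  · exact hvq ((mem_pathEdges_iff hw).2
      ⟨⟨hvw', hvw⟩, hm.imp (desc_trans · huv.1) (desc_trans · huv.1)⟩)
  · exact hwp ((mem_pathEdges_iff hv).2
      ⟨⟨hwv', hvw.symm⟩, hl.imp (desc_trans · huw.1) (desc_trans · huw.1)⟩)

theorem Admissible.exists_pathSystem {r : V} {S : Set V} (hS : T.Admissible r S) :
    ∃ P : PathSystem T, P.topSet = S := by
  classical
  have : Nonempty (Sym2 V) := ⟨s(T.root, T.root)⟩
  choose! F hF using fun v (hv : v ∈ S) => hS.exists_isTopOf hv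
  refine ⟨⟨(Finset.univ.filter (· ∈ S)).image F, ?_, ?_, ?_⟩, ?_⟩
  · simp only [Finset.mem_image, Finset.mem_filter, Finset.mem_univ, true_and]
    rintro _ ⟨v, hv, rfl⟩
    exact (hF v hv).1
  · simp only [Finset.mem_image, Finset.mem_filter, Finset.mem_univ, true_and]
    rintro _ ⟨v, hv, rfl⟩
    exact (hF v hv).2.1
  · simp only [Finset.coe_image, Finset.coe_filter, Finset.mem_univ, true_and]
    rintro _ ⟨v, hv, rfl⟩ _ ⟨w, hw, rfl⟩ hvw
    exact disjoint_pathEdges (hF v hv).2.2.1 (hF w hw).2.2.1 (fun h => (hF v hv).2.2.2 w h hw)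
      (fun h => (hF w hw).2.2.2 v h hv) (fun h => hvw (h ▸ rfl))
  · ext x
    simp only [PathSystem.topSet, Finset.mem_image, Finset.mem_filter, Finset.mem_univ, true_and]
    constructor
    · rintro ⟨_, ⟨v, hv, rfl⟩, hx⟩
      rwa [eq_of_isTopOf hx (hF v hv).2.2.1]
    · intro hx
      exact ⟨F x, ⟨x, hx, rfl⟩, (hF x hx).2.2.1⟩

theorem range_topSet : Set.range (PathSystem.topSet (T := T)) = {S | T.Admissible T.root S} :=
  Set.Subset.antisymm (Set.range_subset_iff.2 PathSystem.admissible_topSet)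
    fun _ hS => hS.exists_pathSystem

/-! ### Counting admissible sets -/

variable (T) in
noncomputable def leafCount (v : V) : ℕ := ({l | T.isLeaf l} ∩ T.subtree v).ncard

lemma reachesLeafAvoiding_inter_subtree {S : Set V} {c c' : V} (h : T.desc c c') :
    T.ReachesLeafAvoiding (S ∩ T.subtree c') c ↔ T.ReachesLeafAvoiding S c := by
  have hS : ∀ u, T.desc u c → (u ∈ S ∩ T.subtree c' ↔ u ∈ S) := fun u hu =>
    and_iff_left (desc_trans hu h)
  simp only [ReachesLeafAvoiding]
  exact exists_congr fun l => and_congr_right fun _ => and_congr_right fun _ =>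
    forall_congr' fun u => imp_congr_right fun _ => forall_congr' fun hu => not_congr (hS u hu)

lemma reachesLeafAvoiding_of_isLeaf {S : Set V} {v : V} (hl : T.isLeaf v) :
    T.ReachesLeafAvoiding S v ↔ v ∉ S := by
  constructor
  · rintro ⟨l, -, hlv, hS⟩
    exact hS v hlv (desc_refl v)
  · intro hv
    exact ⟨v, hl, desc_refl v, fun u hvu huv => desc_antisymm huv hvu ▸ hv⟩

lemma admissible_of_isLeaf {S : Set V} {v : V} (hl : T.isLeaf v) :
    T.Admissible v S ↔ S = ∅ := by
  constructor
  · rintro ⟨hsub, hint, -⟩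
    exact Set.eq_empty_of_forall_notMem fun u hu =>
      hint u hu (eq_of_isLeaf_of_desc hl (hsub hu) ▸ hl)
  · rintro rfl
    exact ⟨Set.empty_subset _, fun _ h => h.elim, fun _ h => h.elim⟩

lemma exists_isLeaf_desc (v : V) : ∃ l, T.isLeaf l ∧ T.desc l v := by
  induction v using T.strictDesc_wellFounded.induction with
  | _ v ih =>
    by_cases hv : T.isLeaf v
    · exact ⟨v, hv, desc_refl v⟩
    · obtain ⟨c₁, c₂, hc⟩ := exists_isChildPair hv
      obtain ⟨l, hl, hlc⟩ := ih c₁ (strictDesc_of_desc_of_isChild (desc_refl c₁) hc.isChild_left)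
      exact ⟨l, hl, desc_trans hlc ⟨1, hc.isChild_left.1⟩⟩

lemma leafCount_pos (v : V) : 0 < T.leafCount v := by
  obtain ⟨l, hl, hlv⟩ := exists_isLeaf_desc (T := T) v
  exact (Set.ncard_pos).2 ⟨l, hl, hlv⟩

lemma leafCount_of_isLeaf {v : V} (hl : T.isLeaf v) : T.leafCount v = 1 := by
  rw [leafCount, Set.ncard_eq_one]
  refine ⟨v, Set.ext fun u => ⟨fun hu => eq_of_isLeaf_of_desc hl hu.2, ?_⟩⟩
  rintro rfl
  exact ⟨hl, desc_refl u⟩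

lemma leafCount_root : T.leafCount T.root = Nat.card {v : V // T.isLeaf v} := by
  rw [leafCount, (Set.eq_univ_of_forall desc_root : T.subtree T.root = Set.univ),
    Set.inter_univ, ← Nat.card_coe_set_eq]
  rfl

section IsChildPair

variable {v c₁ c₂ : V} (hv : T.IsChildPair v c₁ c₂)
include hv

lemma IsChildPair.subtree_eq : T.subtree v = insert v (T.subtree c₁ ∪ T.subtree c₂) := by
  ext u
  simp only [subtree, Set.mem_insert_iff, Set.mem_union, Set.mem_ofPred_eq]
  constructor
  · intro hu
    by_cases huv : u = v
    · exact .inl huv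
    · exact .inr (hv.desc_or_desc ⟨hu, huv⟩)
  · rintro (rfl | hu | hu)
    · exact desc_refl u
    · exact desc_trans hu ⟨1, hv.isChild_left.1⟩
    · exact desc_trans hu ⟨1, hv.isChild_right.1⟩

lemma IsChildPair.notMem_subtree_union : v ∉ T.subtree c₁ ∪ T.subtree c₂ := by
  rintro (h | h)
  exacts [hv.isChild_left.2 (desc_antisymm ⟨1, hv.isChild_left.1⟩ h),
    hv.isChild_right.2 (desc_antisymm ⟨1, hv.isChild_right.1⟩ h)]

lemma IsChildPair.disjoint_subtree : Disjoint (T.subtree c₁) (T.subtree c₂) :=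
  Set.disjoint_left.2 fun _ h₁ h₂ => hv.not_desc_both h₁ h₂

lemma IsChildPair.leafCount_eq : T.leafCount v = T.leafCount c₁ + T.leafCount c₂ := by
  have hvl : v ∉ {l | T.isLeaf l} := hv.isInternal
  rw [leafCount, hv.subtree_eq, Set.inter_insert_of_notMem hvl, Set.inter_union_distrib_left,
    Set.ncard_union_eq]
  · rfl
  · exact hv.disjoint_subtree.mono Set.inter_subset_right Set.inter_subset_right

lemma IsChildPair.reachesLeafAvoiding_iff {S : Set V} :
    T.ReachesLeafAvoiding S v ↔
      v ∉ S ∧ (T.ReachesLeafAvoiding S c₁ ∨ T.ReachesLeafAvoiding S c₂) := by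
  have hup : ∀ c, T.isChild c v → (T.ReachesLeafAvoiding S c ↔
      ∃ l, T.isLeaf l ∧ T.desc l c ∧ ∀ u, T.desc l u → T.strictDesc u v → u ∉ S) :=
    fun c hc => exists_congr fun l => and_congr_right fun _ => and_congr_right fun hlc =>
      ⟨fun hS u hlu huv => hS u hlu (desc_of_desc_of_strictDesc hc hlc hlu huv),
        fun hS u hlu huc => hS u hlu (strictDesc_of_desc_of_isChild huc hc)⟩
  rw [hup c₁ hv.isChild_left, hup c₂ hv.isChild_right]
  constructor
  · rintro ⟨l, hl, hlv, hS⟩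
    refine ⟨hS v hlv (desc_refl v), ?_⟩
    have hlv' : T.strictDesc l v := ⟨hlv, fun h => hv.isInternal (h ▸ hl)⟩
    exact (hv.desc_or_desc hlv').imp (fun h => ⟨l, hl, h, fun u hlu huv => hS u hlu huv.1⟩)
      (fun h => ⟨l, hl, h, fun u hlu huv => hS u hlu huv.1⟩)
  · rintro ⟨hvS, ⟨l, hl, hlc, hS⟩ | ⟨l, hl, hlc, hS⟩⟩
    · refine ⟨l, hl, desc_trans hlc ⟨1, hv.isChild_left.1⟩, fun u hlu huv => ?_⟩
      by_cases h : u = v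
      exacts [h ▸ hvS, hS u hlu ⟨huv, h⟩]
    · refine ⟨l, hl, desc_trans hlc ⟨1, hv.isChild_right.1⟩, fun u hlu huv => ?_⟩
      by_cases h : u = v
      exacts [h ▸ hvS, hS u hlu ⟨huv, h⟩]

lemma IsChildPair.admissible_iff {S : Set V} :
    T.Admissible v S ↔ S ⊆ T.subtree v ∧
      (v ∈ S → T.ReachesLeafAvoiding S c₁ ∧ T.ReachesLeafAvoiding S c₂) ∧
      T.Admissible c₁ (S ∩ T.subtree c₁) ∧ T.Admissible c₂ (S ∩ T.subtree c₂) := by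
  constructor
  · rintro ⟨hsub, hint, hreach⟩
    have hrestrict : ∀ c, T.isChild c v → T.Admissible c (S ∩ T.subtree c) := fun c _ =>
      ⟨Set.inter_subset_right, fun u hu => hint u hu.1, fun w hw c' hc' =>
        (reachesLeafAvoiding_inter_subtree (desc_trans ⟨1, hc'.1⟩ hw.2)).2 (hreach w hw.1 c' hc')⟩
    exact ⟨hsub, fun hvS => ⟨hreach v hvS c₁ hv.isChild_left, hreach v hvS c₂ hv.isChild_right⟩,
      hrestrict c₁ hv.isChild_left, hrestrict c₂ hv.isChild_right⟩
  · rintro ⟨hsub, hvS, h₁, h₂⟩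
    have hsub' := hv.subtree_eq ▸ hsub
    refine ⟨hsub, fun u hu => ?_, fun w hw c hc => ?_⟩
    · rcases hsub' hu with rfl | hu₁ | hu₂
      exacts [hv.isInternal, h₁.2.1 u ⟨hu, hu₁⟩, h₂.2.1 u ⟨hu, hu₂⟩]
    · rcases hsub' hw with rfl | hw₁ | hw₂
      · rcases (hv.2 c).1 hc with rfl | rfl
        exacts [(hvS hw).1, (hvS hw).2]
      · exact (reachesLeafAvoiding_inter_subtree (desc_trans ⟨1, hc.1⟩ hw₁)).1
          (h₁.2.2 w ⟨hw, hw₁⟩ c hc)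
      · exact (reachesLeafAvoiding_inter_subtree (desc_trans ⟨1, hc.1⟩ hw₂)).1
          (h₂.2.2 w ⟨hw, hw₂⟩ c hc)

lemma IsChildPair.ncard_setOf_eq_mul {r P₁ P₂ : Set V → Prop} {X₀ : Set V} (hX₀ : X₀ ⊆ {v})
    (h₁ : ∀ S, P₁ S → S ⊆ T.subtree c₁) (h₂ : ∀ S, P₂ S → S ⊆ T.subtree c₂)
    (hr : ∀ S, r S ↔ S ⊆ T.subtree v ∧ S ∩ {v} = X₀ ∧
      P₁ (S ∩ T.subtree c₁) ∧ P₂ (S ∩ T.subtree c₂)) :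
    {S | r S}.ncard = {S | P₁ S}.ncard * {S | P₂ S}.ncard := by
  rw [Set.ncard_setOf_eq_mul (Set.disjoint_singleton_left.2 hv.notMem_subtree_union)
    (p := (· = X₀)) (q := fun X => X ⊆ T.subtree c₁ ∪ T.subtree c₂ ∧
      P₁ (X ∩ T.subtree c₁) ∧ P₂ (X ∩ T.subtree c₂))
    (fun _ h => h ▸ hX₀) (fun _ h => h.1) fun S => ?_,
    Set.ncard_setOf_eq_mul hv.disjoint_subtree h₁ h₂ fun _ => Iff.rfl]
  · simp
  · rw [hr, hv.subtree_eq, Set.insert_eq]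
    simp only [Set.inter_assoc, Set.union_inter_cancel_left, Set.union_inter_cancel_right,
      Set.inter_subset_right, true_and]

lemma IsChildPair.ncard_admissible :
    {S | T.Admissible v S}.ncard =
      {S | T.Admissible c₁ S ∧ T.ReachesLeafAvoiding S c₁}.ncard *
          {S | T.Admissible c₂ S ∧ T.ReachesLeafAvoiding S c₂}.ncard +
        {S | T.Admissible c₁ S}.ncard * {S | T.Admissible c₂ S}.ncard := by
  have hin : {S | T.Admissible v S ∧ v ∈ S}.ncard =
      {S | T.Admissible c₁ S ∧ T.ReachesLeafAvoiding S c₁}.ncard *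
        {S | T.Admissible c₂ S ∧ T.ReachesLeafAvoiding S c₂}.ncard :=
    hv.ncard_setOf_eq_mul subset_rfl (fun _ h => h.1.1) (fun _ h => h.1.1) fun S => by
      rw [hv.admissible_iff, reachesLeafAvoiding_inter_subtree (desc_refl c₁),
        reachesLeafAvoiding_inter_subtree (desc_refl c₂), Set.inter_eq_right,
        Set.singleton_subset_iff]
      tauto
  have hout : {S | T.Admissible v S ∧ v ∉ S}.ncard =
      {S | T.Admissible c₁ S}.ncard * {S | T.Admissible c₂ S}.ncard :=
    hv.ncard_setOf_eq_mul (Set.empty_subset _) (fun _ h => h.1) (fun _ h => h.1) fun S => by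
      rw [hv.admissible_iff, Set.inter_singleton_eq_empty]
      tauto
  rw [← hin, ← hout]
  exact (Set.ncard_inter_add_ncard_sdiff_eq_ncard _ _).symm

lemma IsChildPair.ncard_admissible_reachesLeafAvoiding :
    {S | T.Admissible v S ∧ T.ReachesLeafAvoiding S v}.ncard =
      {S | T.Admissible c₁ S ∧ T.ReachesLeafAvoiding S c₁}.ncard *
          {S | T.Admissible c₂ S}.ncard +
        {S | T.Admissible c₁ S ∧ ¬ T.ReachesLeafAvoiding S c₁}.ncard *
          {S | T.Admissible c₂ S ∧ T.ReachesLeafAvoiding S c₂}.ncard := by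
  have hyes : {S | (T.Admissible v S ∧ T.ReachesLeafAvoiding S v) ∧
      T.ReachesLeafAvoiding S c₁}.ncard =
      {S | T.Admissible c₁ S ∧ T.ReachesLeafAvoiding S c₁}.ncard *
        {S | T.Admissible c₂ S}.ncard :=
    hv.ncard_setOf_eq_mul (Set.empty_subset _) (fun _ h => h.1.1) (fun _ h => h.1) fun S => by
      rw [hv.admissible_iff, hv.reachesLeafAvoiding_iff,
        reachesLeafAvoiding_inter_subtree (desc_refl c₁), Set.inter_singleton_eq_empty]
      tauto
  have hno : {S | (T.Admissible v S ∧ T.ReachesLeafAvoiding S v) ∧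
      ¬ T.ReachesLeafAvoiding S c₁}.ncard =
      {S | T.Admissible c₁ S ∧ ¬ T.ReachesLeafAvoiding S c₁}.ncard *
        {S | T.Admissible c₂ S ∧ T.ReachesLeafAvoiding S c₂}.ncard :=
    hv.ncard_setOf_eq_mul (Set.empty_subset _) (fun _ h => h.1.1) (fun _ h => h.1.1) fun S => by
      rw [hv.admissible_iff, hv.reachesLeafAvoiding_iff,
        reachesLeafAvoiding_inter_subtree (desc_refl c₁),
        reachesLeafAvoiding_inter_subtree (desc_refl c₂), Set.inter_singleton_eq_empty]
      tauto
  rw [← hyes, ← hno]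
  exact (Set.ncard_inter_add_ncard_sdiff_eq_ncard _ _).symm

end IsChildPair

variable (T) in
theorem ncard_admissible (v : V) :
    {S | T.Admissible v S}.ncard = Nat.fib (T.leafCount v + 1) ∧
      {S | T.Admissible v S ∧ T.ReachesLeafAvoiding S v}.ncard = Nat.fib (T.leafCount v) := by
  induction v using T.strictDesc_wellFounded.induction with
  | _ v ih =>
    by_cases hl : T.isLeaf v
    · have ha : {S | T.Admissible v S} = {∅} := Set.ext fun _ => admissible_of_isLeaf hl
      have hf : {S | T.Admissible v S ∧ T.ReachesLeafAvoiding S v} = {∅} := by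
        refine Set.ext fun S => (and_iff_left_of_imp fun hS => ?_).trans (admissible_of_isLeaf hl)
        rw [reachesLeafAvoiding_of_isLeaf hl, (admissible_of_isLeaf hl).1 hS]
        exact Set.notMem_empty v
      rw [ha, hf, Set.ncard_singleton, leafCount_of_isLeaf hl]
      exact ⟨Nat.fib_two.symm, Nat.fib_one.symm⟩
    obtain ⟨c₁, c₂, hv⟩ := exists_isChildPair hl
    obtain ⟨ha₁, hf₁⟩ := ih c₁ (strictDesc_of_desc_of_isChild (desc_refl c₁) hv.isChild_left)
    obtain ⟨ha₂, hf₂⟩ := ih c₂ (strictDesc_of_desc_of_isChild (desc_refl c₂) hv.isChild_right)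
    obtain ⟨m, hm⟩ := Nat.exists_eq_add_one.2 (leafCount_pos (T := T) c₁)
    have hg₁ : {S | T.Admissible c₁ S ∧ ¬ T.ReachesLeafAvoiding S c₁}.ncard = Nat.fib m := by
      have hsplit : {S | T.Admissible c₁ S ∧ T.ReachesLeafAvoiding S c₁}.ncard +
          {S | T.Admissible c₁ S ∧ ¬ T.ReachesLeafAvoiding S c₁}.ncard =
          {S | T.Admissible c₁ S}.ncard :=
        Set.ncard_inter_add_ncard_sdiff_eq_ncard _ _
      rw [hf₁, ha₁, hm, Nat.fib_add_two] at hsplit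
      omega
    rw [hv.ncard_admissible, hv.ncard_admissible_reachesLeafAvoiding, hv.leafCount_eq, ha₁, ha₂,
      hf₁, hf₂, hg₁, hm]
    constructor
    · exact (Nat.fib_add _ _).symm
    · rw [show m + 1 + T.leafCount c₂ = m + T.leafCount c₂ + 1 by ring, Nat.fib_add]
      ring

/-! ### Top-vectors -/

variable (T) in
noncomputable def topVectorOf (S : Set V) : {v : V // T.isInternal v} → ℝ :=
  fun v => S.indicator (fun _ => 1) v

lemma topVectors_eq_image : T.topVectors = T.topVectorOf '' {S | T.Admissible T.root S} := by
  rw [← range_topSet, ← Set.range_comp]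
  rfl

lemma topVectorOf_injOn : Set.InjOn T.topVectorOf {S | S ⊆ {v | T.isInternal v}} := by
  intro S₁ h₁ S₂ h₂ h
  ext u
  by_cases hu : T.isInternal u
  · have hu' : S₁.indicator (1 : V → ℝ) u = S₂.indicator 1 u := congrFun h ⟨u, hu⟩
    rw [← Set.indicator_eq_one_iff_mem ℝ, hu', Set.indicator_eq_one_iff_mem]
  · exact iff_of_false (fun h => hu (h₁ h)) (fun h => hu (h₂ h))

lemma topVectors_eq_zero_or_one : ∀ x ∈ T.topVectors, ∀ i, x i = 0 ∨ x i = 1 := by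
  rintro _ ⟨P, rfl⟩ i
  by_cases h : (i : V) ∈ P.topSet <;> simp [PathSystem.topVector, h]

end RBT

theorem cfnmc_vertices_fib_general {V : Type} [Fintype V] [DecidableEq V] (T : RBT V) (n : ℕ)
    (hleaves : Nat.card {v : V // T.isLeaf v} = n) :
    T.topVectors.ncard = Nat.fib (n + 1) ∧
      T.topVectors = Set.extremePoints ℝ T.cfnmcPolytope := by
  refine ⟨?_, (extremePoints_convexHull_of_forall_eq_zero_or_one
    RBT.topVectors_eq_zero_or_one).symm⟩
  rw [RBT.topVectors_eq_image, (RBT.topVectorOf_injOn.mono fun S hS => hS.2.1).ncard_image,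
    (T.ncard_admissible T.root).1, RBT.leafCount_root, hleaves]

/-- Let `T` be a rooted binary tree with `n ≥ 2` leaves.  Then the CFN-MC
polytope `R_T` has exactly `F_n` vertices: the set of distinct top-vectors of systems of
disjoint paths in `T` has cardinality `F_n` (where `F_n = Nat.fib (n+1)`, i.e. the
Fibonacci numbers with `F_0 = F_1 = 1`), and this set is precisely the set of extreme
points of `R_T`. -/
theorem cfnmc_vertices_fib {V : Type} [Fintype V] [DecidableEq V] (T : RBT V) (n : ℕ)
    (hn : 2 ≤ n) (hleaves : Nat.card {v : V // T.isLeaf v} = n) :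
    T.topVectors.ncard = Nat.fib (n + 1) ∧
      T.topVectors = Set.extremePoints ℝ T.cfnmcPolytope :=
  cfnmc_vertices_fib_general T n hleaves
end

section
/- Let n ≥ 1 and define φ: ℝ^n → ℝ^n by φ(x)_i = x_i for odd i and φ(x)_i = 1 − x_i for even i (an affine involution whose linear part is the diagonal matrix with entries +1 at odd indices and −1 at even indices, of determinant ±1). Then φ maps A_n bijectively onto O_n; that is, φ(A_n) = O_n. -/
/-- The polytope `A_n ⊆ ℝ^n` (the CFN-MC polytope of the caterpillar tree with `n+1`
leaves): `0 ≤ x_i ≤ 1` for all `i`, and `x_i + x_{i+1} ≤ 1` for `1 ≤ i ≤ n−1`.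
(Coordinates are 0-indexed by `Fin n`, so index `i : Fin n` is coordinate `i+1`.) -/
def catPolytope (n : ℕ) : Set (Fin n → ℝ) :=
  {x | (∀ i, 0 ≤ x i ∧ x i ≤ 1) ∧
    ∀ i : Fin n, ∀ h : (i : ℕ) + 1 < n, x i + x ⟨(i : ℕ) + 1, h⟩ ≤ 1}

/-- The order polytope `O_n ⊆ ℝ^n` of the zig-zag poset on `n` elements:
`0 ≤ v_i ≤ 1` for all `i`, `v_i ≤ v_{i+1}` for odd `i ≤ n−1` and `v_i ≥ v_{i+1}` for even
`i ≤ n−1` (1-indexed; in the 0-indexed coordinates below, the constraint between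
coordinates `i` and `i+1` is `≤` when `i` is even and `≥` when `i` is odd). -/
def zigzagOrderPolytope (n : ℕ) : Set (Fin n → ℝ) :=
  {v | (∀ i, 0 ≤ v i ∧ v i ≤ 1) ∧
    ∀ i : Fin n, ∀ h : (i : ℕ) + 1 < n,
      if (i : ℕ) % 2 = 0 then v i ≤ v ⟨(i : ℕ) + 1, h⟩ else v ⟨(i : ℕ) + 1, h⟩ ≤ v i}

/-- The affine involution `φ : ℝ^n → ℝ^n` fixing the odd (1-indexed) coordinates and
sending `x_i ↦ 1 − x_i` on the even (1-indexed) coordinates; its linear part is the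
diagonal matrix with entries `±1`, of determinant `±1`. -/
def zigzagFlip (n : ℕ) (x : Fin n → ℝ) : Fin n → ℝ := fun i =>
  if (i : ℕ) % 2 = 0 then x i else 1 - x i

/-- For `n ≥ 1`, the unimodular affine involution `φ` maps `A_n`
bijectively onto `O_n`: `φ(A_n) = O_n`. -/
theorem caterpillar_polytope_eq_order_polytope (n : ℕ) (hn : 1 ≤ n) :
    zigzagFlip n '' catPolytope n = zigzagOrderPolytope n := by
  ext v
  simp only [Set.mem_image, catPolytope, zigzagOrderPolytope, zigzagFlip, Set.mem_setOf_eq]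
  constructor
  · rintro ⟨x, ⟨hb, hc⟩, rfl⟩
    refine ⟨fun i => ?_, fun i h => ?_⟩
    · obtain ⟨h0, h1⟩ := hb i
      simp only [zigzagFlip]
      split <;> constructor <;> linarith
    · have key := hc i h
      obtain ⟨h0, h0'⟩ := hb i
      obtain ⟨h1, h1'⟩ := hb ⟨(i : ℕ) + 1, h⟩
      simp only [zigzagFlip]
      rcases Nat.even_or_odd (i : ℕ) with he | ho
      · have e1 : (i : ℕ) % 2 = 0 := Nat.even_iff.mp he
        have e2 : ((i : ℕ) + 1) % 2 = 1 := by omega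
        simp only [e1, e2, if_true]
        norm_num
        linarith
      · have e1 : (i : ℕ) % 2 = 1 := Nat.odd_iff.mp ho
        have e2 : ((i : ℕ) + 1) % 2 = 0 := by omega
        simp only [e1, e2]
        norm_num
        linarith
  · rintro ⟨hb, hc⟩
    refine ⟨fun i => if (i : ℕ) % 2 = 0 then v i else 1 - v i, ⟨fun i => ?_, fun i h => ?_⟩, ?_⟩
    · obtain ⟨h0, h1⟩ := hb i
      dsimp only
      split <;> constructor <;> linarith
    · have key := hc i h
      obtain ⟨h0, h0'⟩ := hb i
      obtain ⟨h1, h1'⟩ := hb ⟨(i : ℕ) + 1, h⟩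
      dsimp only
      rcases Nat.even_or_odd (i : ℕ) with he | ho
      · have e1 : (i : ℕ) % 2 = 0 := Nat.even_iff.mp he
        have e2 : ((i : ℕ) + 1) % 2 = 1 := by omega
        simp only [e1, e2, if_true] at key ⊢
        norm_num
        linarith
      · have e1 : (i : ℕ) % 2 = 1 := Nat.odd_iff.mp ho
        have e2 : ((i : ℕ) + 1) % 2 = 0 := by omega
        simp only [e1, e2] at key ⊢
        norm_num at key ⊢
        linarith
    · funext i
      simp only [zigzagFlip]
      by_cases hi : (i : ℕ) % 2 = 0 <;> simp [hi]
end

section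
/- For all integers n ≥ 1 and m ≥ 0, the number of integer vectors z ∈ ℤ^n with 0 ≤ z_i ≤ m for all i and z_i + z_{i+1} ≤ m for all 1 ≤ i ≤ n−1 equals the number of integer vectors z ∈ ℤ^n with 0 ≤ z_i ≤ m for all i, z_i ≤ z_{i+1} for all odd i ≤ n−1, and z_i ≥ z_{i+1} for all even i ≤ n−1. In other words, the polytopes A_n and O_n have the same Ehrhart polynomial. -/
/-- For all integers `n ≥ 1` and `m ≥ 0`, the number of integer vectors
`z ∈ ℤ^n` with `0 ≤ z_i ≤ m` for all `i` and `z_i + z_{i+1} ≤ m` for `1 ≤ i ≤ n−1` equals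
the number of integer vectors `z ∈ ℤ^n` with `0 ≤ z_i ≤ m` for all `i`, `z_i ≤ z_{i+1}`
for odd `i ≤ n−1` and `z_i ≥ z_{i+1}` for even `i ≤ n−1`.  (Coordinates are 0-indexed by
`Fin n`; the 1-indexed parity condition on the pair `(i, i+1)` becomes a parity condition
on the 0-indexed `i` as written.)  In other words, the polytopes `A_n` and `O_n` have the
same Ehrhart polynomial. -/
theorem caterpillar_order_polytope_ehrhart (n : ℕ) (hn : 1 ≤ n) (m : ℕ) :
    Nat.card {z : Fin n → ℤ //
        (∀ i, 0 ≤ z i ∧ z i ≤ (m : ℤ)) ∧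
          ∀ i : Fin n, ∀ h : (i : ℕ) + 1 < n, z i + z ⟨(i : ℕ) + 1, h⟩ ≤ (m : ℤ)} =
      Nat.card {z : Fin n → ℤ //
        (∀ i, 0 ≤ z i ∧ z i ≤ (m : ℤ)) ∧
          ∀ i : Fin n, ∀ h : (i : ℕ) + 1 < n,
            if (i : ℕ) % 2 = 0 then z i ≤ z ⟨(i : ℕ) + 1, h⟩
            else z ⟨(i : ℕ) + 1, h⟩ ≤ z i} := by
  apply Nat.card_congr
  refine ⟨fun z => ⟨fun i => if (i : ℕ) % 2 = 0 then z.1 i else (m : ℤ) - z.1 i, ?_, ?_⟩,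
          fun v => ⟨fun i => if (i : ℕ) % 2 = 0 then v.1 i else (m : ℤ) - v.1 i, ?_, ?_⟩,
          ?_, ?_⟩
  · intro i
    have := z.2.1 i
    dsimp only
    split_ifs <;> constructor <;> linarith [this.1, this.2]
  · intro i h
    have hz := z.2.2 i h
    dsimp only
    by_cases hi : (i : ℕ) % 2 = 0
    · have h1 : ¬ ((i : ℕ) + 1) % 2 = 0 := by omega
      simp only [hi, h1, if_pos, if_neg, if_true, if_false]
      linarith
    · have h1 : ((i : ℕ) + 1) % 2 = 0 := by omega
      simp only [hi, h1, if_true, if_false]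
      linarith
  · intro i
    have := v.2.1 i
    dsimp only
    split_ifs <;> constructor <;> linarith [this.1, this.2]
  · intro i h
    have hv := v.2.2 i h
    dsimp only
    by_cases hi : (i : ℕ) % 2 = 0
    · have h1 : ¬ ((i : ℕ) + 1) % 2 = 0 := by omega
      simp only [hi, h1, if_true, if_false] at *
      linarith
    · have h1 : ((i : ℕ) + 1) % 2 = 0 := by omega
      simp only [hi, h1, if_true, if_false] at *
      linarith
  · intro z
    ext i
    simp only
    split_ifs <;> ring
  · intro v
    ext i
    simp only
    split_ifs <;> ring
end

section
/- For every n ≥ 1, the n-dimensional Lebesgue volume of the polytope A_n = {x ∈ ℝ^n : 0 ≤ x_i ≤ 1 for all i, and x_i + x_{i+1} ≤ 1 for 1 ≤ i ≤ n−1} equals E_n/n!; that is, the normalized volume of the CFN-MC polytope of the caterpillar tree with n+1 leaves is the Euler zig-zag number E_n. -/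
/-- The Euler zig-zag number `E_m`: the number of alternating permutations
`a₁ a₂ ⋯ a_m` of `{1, …, m}`, i.e. permutations with `a₁ < a₂ > a₃ < a₄ > ⋯`
(with `E₀ = 1`). -/
noncomputable def zigzag (m : ℕ) : ℕ :=
  Nat.card {σ : Equiv.Perm (Fin m) //
    ∀ i : Fin m, ∀ h : (i : ℕ) + 1 < m,
      if (i : ℕ) % 2 = 0 then σ i < σ ⟨(i : ℕ) + 1, h⟩ else σ ⟨(i : ℕ) + 1, h⟩ < σ i}

/-!
Reflecting the odd-indexed coordinates, `x_i ↦ 1 - x_i`, preserves volume and turns `A_n` into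
the zigzag region `{y ∈ [0,1]^n | y₀ ≤ y₁ ≥ y₂ ≤ ⋯}`. Off the null set where two coordinates
coincide, the cube is the disjoint union of the `n!` order cells, one for each relative order of
the coordinates; they are congruent under permutation of coordinates, so each has volume `1/n!`.
The zigzag region is, up to a null set, the union of the cells whose rank permutation is
alternating.
-/

open MeasureTheory Set Function
open scoped ENNReal Nat

theorem ae_apply_ne_apply {ι : Type*} [Fintype ι] (μ : Measure (ι → ℝ)) [μ.IsAddHaarMeasure]
    {i j : ι} (hij : i ≠ j) : ∀ᵐ y ∂μ, y i ≠ y j := by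
  classical
  let L : (ι → ℝ) →ₗ[ℝ] ℝ := (LinearMap.proj i : (ι → ℝ) →ₗ[ℝ] ℝ) - LinearMap.proj j
  have hL : (LinearMap.ker L : Set (ι → ℝ)) = {y | y i = y j} := by
    ext y; simp [L, sub_eq_zero]
  have hL_ne_top : LinearMap.ker L ≠ ⊤ := fun h => by
    have : Pi.single i 1 ∈ LinearMap.ker L := h ▸ Submodule.mem_top
    simp [L, Pi.single_eq_of_ne hij.symm] at this
  rw [ae_iff]
  simpa [hL] using Measure.addHaar_submodule μ _ hL_ne_top

theorem ae_injective {ι : Type*} [Fintype ι] (μ : Measure (ι → ℝ)) [μ.IsAddHaarMeasure] :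
    ∀ᵐ y ∂μ, Injective y := by
  have hne : ∀ i j, ∀ᵐ y ∂μ, y i = y j → i = j := fun i j => by
    rcases eq_or_ne i j with rfl | hij
    · exact .of_forall fun _ _ => rfl
    · filter_upwards [ae_apply_ne_apply μ hij] with y hy h using absurd h hy
  filter_upwards [ae_all_iff.2 fun i => ae_all_iff.2 (hne i)] with y hy i j using hy i j

section OrderCell

variable {n : ℕ}

def orderCell (σ : Equiv.Perm (Fin n)) : Set (Fin n → ℝ) :=
  Icc 0 1 ∩ {y | StrictMono (y ∘ σ.symm)}

theorem lt_iff_of_mem_orderCell {σ : Equiv.Perm (Fin n)} {y : Fin n → ℝ} (hy : y ∈ orderCell σ)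
    (i j : Fin n) : y i < y j ↔ σ i < σ j := by
  simpa using hy.2.lt_iff_lt (a := σ i) (b := σ j)

theorem le_iff_of_mem_orderCell {σ : Equiv.Perm (Fin n)} {y : Fin n → ℝ} (hy : y ∈ orderCell σ)
    {i j : Fin n} (hij : i ≠ j) : y i ≤ y j ↔ σ i < σ j := by
  rw [← not_lt, lt_iff_of_mem_orderCell hy, not_lt, (σ.injective.ne hij).le_iff_lt]

theorem eq_symm_sort_of_mem_orderCell {σ : Equiv.Perm (Fin n)} {y : Fin n → ℝ}
    (hy : y ∈ orderCell σ) : σ = (Tuple.sort y).symm := by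
  have hsort : σ.symm = Tuple.sort y :=
    Tuple.eq_sort_iff.2 ⟨hy.2.monotone, fun _ _ hij he => absurd (hy.2.injective he) hij.ne⟩
  rw [← hsort, Equiv.symm_symm]

theorem mem_orderCell_symm_sort {y : Fin n → ℝ} (hy : y ∈ Icc 0 1) (hinj : Injective y) :
    y ∈ orderCell (Tuple.sort y).symm :=
  ⟨hy, by
    simpa using (Tuple.monotone_sort y).strictMono_of_injective (hinj.comp (Equiv.injective _))⟩

theorem pairwise_disjoint_orderCell :
    Pairwise (Disjoint on (orderCell : Equiv.Perm (Fin n) → Set (Fin n → ℝ))) :=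
  fun _ _ hστ => disjoint_left.2 fun _ hσ hτ =>
    hστ ((eq_symm_sort_of_mem_orderCell hσ).trans (eq_symm_sort_of_mem_orderCell hτ).symm)

theorem measurableSet_orderCell (σ : Equiv.Perm (Fin n)) : MeasurableSet (orderCell σ) := by
  refine measurableSet_Icc.inter ?_
  simp only [StrictMono, ofPred_forall]
  exact .iInter fun i => .iInter fun j => .iInter fun _ =>
    measurableSet_lt (measurable_pi_apply _) (measurable_pi_apply _)

theorem volume_orderCell_eq (σ : Equiv.Perm (Fin n)) :
    volume (orderCell σ) = volume (orderCell (1 : Equiv.Perm (Fin n))) := by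
  let e := MeasurableEquiv.piCongrLeft (fun _ : Fin n => ℝ) σ
  have he : ∀ y, e y = y ∘ σ.symm := fun y => by
    ext i; simp [e, MeasurableEquiv.piCongrLeft, Equiv.piCongrLeft_apply]
  have hpre : e ⁻¹' orderCell 1 = orderCell σ := by
    ext y
    simp [orderCell, he, Pi.le_def, Equiv.forall_congr_right (q := fun i => 0 ≤ y i),
      Equiv.forall_congr_right (q := fun i => y i ≤ 1),
      show (1 : Equiv.Perm (Fin n)).symm = 1 from rfl]
  rw [← hpre]
  exact (volume_measurePreserving_piCongrLeft (fun _ => ℝ) σ).measure_preimage_equiv _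

theorem ae_eq_biUnion_orderCell {B : Set (Fin n → ℝ)} {s : Finset (Equiv.Perm (Fin n))}
    (hB : B ⊆ Icc 0 1) (hs : ∀ σ, ∀ y ∈ orderCell σ, y ∈ B ↔ σ ∈ s) :
    B =ᵐ[volume] (⋃ σ ∈ s, orderCell σ : Set _) := by
  rw [Filter.eventuallyEq_set]
  filter_upwards [ae_injective (volume : Measure (Fin n → ℝ))] with y hy
  simp only [mem_iUnion, exists_prop]
  constructor
  · intro hyB
    have hcell := mem_orderCell_symm_sort (hB hyB) hy
    exact ⟨_, (hs _ y hcell).1 hyB, hcell⟩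
  · rintro ⟨σ, hσ, hcell⟩
    exact (hs σ y hcell).2 hσ

theorem volume_biUnion_orderCell (s : Finset (Equiv.Perm (Fin n))) :
    volume (⋃ σ ∈ s, orderCell σ) = s.card * volume (orderCell (1 : Equiv.Perm (Fin n))) := by
  rw [measure_biUnion_finset (pairwise_disjoint_orderCell.set_pairwise _)
    (fun σ _ => measurableSet_orderCell σ)]
  simp [volume_orderCell_eq]

theorem volume_orderCell (σ : Equiv.Perm (Fin n)) : volume (orderCell σ) = (n ! : ℝ≥0∞)⁻¹ := by
  have hcube := measure_congr (ae_eq_biUnion_orderCell (B := (Icc 0 1 : Set (Fin n → ℝ)))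
    (s := .univ) subset_rfl fun σ _ hy => iff_of_true hy.1 (Finset.mem_univ σ))
  rw [volume_biUnion_orderCell, Real.volume_Icc_pi, Finset.card_univ, Fintype.card_perm,
    Fintype.card_fin] at hcube
  simp only [Pi.one_apply, Pi.zero_apply, sub_zero, ENNReal.ofReal_one,
    Finset.prod_const_one] at hcube
  rw [volume_orderCell_eq]
  exact ENNReal.eq_inv_of_mul_eq_one_left (by rw [hcube, mul_comm])

theorem volume_eq_card_div_factorial {B : Set (Fin n → ℝ)} {s : Finset (Equiv.Perm (Fin n))}
    (hB : B ⊆ Icc 0 1) (hs : ∀ σ, ∀ y ∈ orderCell σ, y ∈ B ↔ σ ∈ s) :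
    volume B = s.card / n ! := by
  rw [measure_congr (ae_eq_biUnion_orderCell hB hs), volume_biUnion_orderCell, volume_orderCell,
    div_eq_mul_inv]

end OrderCell

section Caterpillar

variable {n : ℕ}

def IsAlternating (σ : Equiv.Perm (Fin n)) : Prop :=
  ∀ i : Fin n, ∀ h : (i : ℕ) + 1 < n,
    if (i : ℕ) % 2 = 0 then σ i < σ ⟨(i : ℕ) + 1, h⟩ else σ ⟨(i : ℕ) + 1, h⟩ < σ i

instance : DecidablePred (IsAlternating (n := n)) := fun σ => by
  unfold IsAlternating; infer_instance

open Finset in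
theorem zigzag_eq_card_isAlternating (n : ℕ) :
    zigzag n = #{σ : Equiv.Perm (Fin n) | IsAlternating σ} := by
  rw [zigzag, Nat.card_eq_fintype_card, Fintype.card_subtype]
  rfl

def flipOdd (y : Fin n → ℝ) : Fin n → ℝ :=
  fun i => if (i : ℕ) % 2 = 0 then y i else 1 - y i

theorem flipOdd_involutive : Involutive (flipOdd (n := n)) := fun y => by
  ext i; by_cases hi : (i : ℕ) % 2 = 0 <;> simp [flipOdd, hi]

theorem measurePreserving_flipOdd : MeasurePreserving (flipOdd (n := n)) := by
  refine volume_preserving_pi (α' := fun _ : Fin n => ℝ) (β' := fun _ => ℝ)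
    (f := fun i t => if (i : ℕ) % 2 = 0 then t else 1 - t) fun i => ?_
  split_ifs
  · exact .id volume
  · simpa using Measure.measurePreserving_sub_left volume (1 : ℝ)

theorem volume_preimage_flipOdd (s : Set (Fin n → ℝ)) : volume (flipOdd ⁻¹' s) = volume s :=
  measurePreserving_flipOdd.measure_preimage_emb (MeasurableEquiv.ofInvolutive _
    flipOdd_involutive measurePreserving_flipOdd.measurable).measurableEmbedding s

theorem flipOdd_apply_mem_Icc_iff {y : Fin n → ℝ} {i : Fin n} :
    flipOdd y i ∈ Icc 0 1 ↔ y i ∈ Icc 0 1 := by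
  by_cases hi : (i : ℕ) % 2 = 0
  · simp only [flipOdd, hi, if_true]
  · simp only [flipOdd, hi, if_false, mem_Icc]
    constructor <;> intro h <;> constructor <;> linarith [h.1, h.2]

theorem preimage_flipOdd_catPolytope_subset : flipOdd ⁻¹' catPolytope n ⊆ Icc 0 1 :=
  fun _ hy => ⟨fun i => (flipOdd_apply_mem_Icc_iff.1 (hy.1 i)).1,
    fun i => (flipOdd_apply_mem_Icc_iff.1 (hy.1 i)).2⟩

theorem flipOdd_mem_catPolytope_iff {σ : Equiv.Perm (Fin n)} {y : Fin n → ℝ}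
    (hy : y ∈ orderCell σ) : flipOdd y ∈ catPolytope n ↔ IsAlternating σ := by
  have hcube : ∀ i, 0 ≤ flipOdd y i ∧ flipOdd y i ≤ 1 := fun i =>
    flipOdd_apply_mem_Icc_iff.2 ⟨hy.1.1 i, hy.1.2 i⟩
  simp only [catPolytope, mem_ofPred_eq, hcube, implies_true, true_and, IsAlternating]
  refine forall₂_congr fun i h => ?_
  have hne : i ≠ ⟨(i : ℕ) + 1, h⟩ := fun he => by simpa using congrArg Fin.val he
  by_cases hi : (i : ℕ) % 2 = 0
  · have hi' : ¬((i : ℕ) + 1) % 2 = 0 := by omega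
    simp only [flipOdd, hi, hi', if_true, if_false, ← le_iff_of_mem_orderCell hy hne]
    constructor <;> intro <;> linarith
  · have hi' : ((i : ℕ) + 1) % 2 = 0 := by omega
    simp only [flipOdd, hi, hi', if_true, if_false, ← le_iff_of_mem_orderCell hy hne.symm]
    constructor <;> intro <;> linarith

end Caterpillar

theorem caterpillar_polytope_volume_general (n : ℕ) :
    MeasureTheory.volume (catPolytope n) =
      (zigzag n : ENNReal) / (Nat.factorial n : ENNReal) := by
  rw [← volume_preimage_flipOdd,
    volume_eq_card_div_factorial (s := {σ | IsAlternating σ}) preimage_flipOdd_catPolytope_subset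
      fun σ y hy => by simpa using flipOdd_mem_catPolytope_iff hy,
    zigzag_eq_card_isAlternating]

/-- For every `n ≥ 1`, the `n`-dimensional Lebesgue volume of `A_n`
equals `E_n/n!`; that is, the normalized volume of the CFN-MC polytope of the caterpillar
tree with `n+1` leaves is the Euler zig-zag number `E_n`. -/
theorem caterpillar_polytope_volume (n : ℕ) (hn : 1 ≤ n) :
    MeasureTheory.volume (catPolytope n) =
      (zigzag n : ENNReal) / (Nat.factorial n : ENNReal) :=
  caterpillar_polytope_volume_general n
end
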